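/- Let s ∈ B_n and t ∈ B. If s ⪯ t ⪯ s + ⟨1⟩, then t = s or t = s + ⟨1⟩. Moreover τ(s + ⟨1⟩) − τ(s) = λ(n). -/

import Mathlib

/-- The `j`-th entry (1-indexed) of a finite sequence of positive naturals,
viewed as a natural number. Only used for `1 ≤ j ≤ s.length`. -/
def nthSeq (s : List ℕ+) (j : ℕ) : ℕ := ↑(s.getD (j - 1) 1)

/-- The linear order `⪯` on finite sequences of positive natural numbers:
`s ⪯ t` iff either (a) there is an index `j ≤ min (ℓ s) (ℓ t)` which is the first index where
`s` and `t` differ, and there `s j < t j`, or (b) `ℓ s ≤ ℓ t` and `t` extends `s`. -/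
def sle (s t : List ℕ+) : Prop :=
  (∃ j, 1 ≤ j ∧ j ≤ min s.length t.length ∧
     (∀ i, 1 ≤ i → i < j → nthSeq s i = nthSeq t i) ∧ nthSeq s j < nthSeq t j) ∨
  (s.length ≤ t.length ∧ ∀ j, 1 ≤ j → j ≤ s.length → nthSeq s j = nthSeq t j)

/-- The strict version `≺` of the order `⪯`. -/
def slt (s t : List ℕ+) : Prop := sle s t ∧ s ≠ t

/-- The set `B` of nonempty sequences `s` with `s i ≤ i` for all `1 ≤ i ≤ ℓ s`. -/
def BSet : Set (List ℕ+) := {s | 1 ≤ s.length ∧ ∀ i, 1 ≤ i → i ≤ s.length → nthSeq s i ≤ i}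

/-- `λ n = 1 / (2^n n!)`. -/
noncomputable def lam (n : ℕ) : ℝ := 1 / ((2 : ℝ) ^ n * (n.factorial : ℝ))

/-- `τ s = Σ_{t ∈ B, t ≺ s} λ (ℓ t)`. -/
noncomputable def tau (s : List ℕ+) : ℝ :=
  ∑' t : {t : List ℕ+ // t ∈ BSet ∧ slt t s}, lam t.1.length

/-!
Appending `1` to `s` produces its immediate successor in `⪯`: an intermediate `t` either
branches off `s` upwards at some position `j ≤ ℓ(s)` (and then lies above `s + ⟨1⟩` too) or
extends `s`, and an extension strictly below `s + ⟨1⟩` would need an entry `< 1`. Hence the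
elements of `B` below `s + ⟨1⟩` are those below `s`, together with `s` itself, and
`τ(s + ⟨1⟩) = τ(s) + λ(ℓ(s))`. For this the series `τ` must converge: `t ↦ (t(i) - 1)_i` embeds
`B_n` into `∏_{i < n} Fin (i + 1)`, so `|B_n| ≤ n!` and `Σ_t λ(ℓ(t)) ≤ Σ_n 2⁻ⁿ`.
-/

lemma nthSeq_succ (s : List ℕ+) {i : ℕ} (hi : i < s.length) : nthSeq s (i + 1) = (s[i] : ℕ) := by
  simp [nthSeq, hi]

lemma one_le_nthSeq (s : List ℕ+) (j : ℕ) : 1 ≤ nthSeq s j :=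
  PNat.pos _

lemma eq_of_nthSeq_eq {s t : List ℕ+} (hl : s.length = t.length)
    (h : ∀ j, 1 ≤ j → j ≤ s.length → nthSeq s j = nthSeq t j) : s = t := by
  refine List.ext_getElem hl fun i hs ht => PNat.coe_injective ?_
  rw [← nthSeq_succ s hs, ← nthSeq_succ t ht]
  exact h (i + 1) (by omega) (by omega)

lemma nthSeq_append_singleton_of_le (s : List ℕ+) (a : ℕ+) {j : ℕ} (h1 : 1 ≤ j)
    (h2 : j ≤ s.length) : nthSeq (s ++ [a]) j = nthSeq s j := by
  rw [nthSeq, nthSeq, List.getD_append _ _ _ _ (by omega)]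

lemma nthSeq_append_singleton_length_succ (s : List ℕ+) (a : ℕ+) :
    nthSeq (s ++ [a]) (s.length + 1) = a := by
  simp [nthSeq]

lemma sle_total (s t : List ℕ+) : sle s t ∨ sle t s := by
  classical
  by_cases h : ∃ j, (1 ≤ j ∧ j ≤ min s.length t.length) ∧ nthSeq s j ≠ nthSeq t j
  · obtain ⟨⟨hj1, hj2⟩, hne⟩ := Nat.find_spec h
    have hagree : ∀ i, 1 ≤ i → i < Nat.find h → nthSeq s i = nthSeq t i := fun i hi1 hi2 =>
      not_not.1 fun hne' => Nat.find_min h hi2 ⟨⟨hi1, hi2.le.trans hj2⟩, hne'⟩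
    rcases hne.lt_or_gt with hlt | hlt
    · exact .inl (.inl ⟨_, hj1, hj2, hagree, hlt⟩)
    · exact .inr (.inl ⟨_, hj1, by omega, fun i h1 h2 => (hagree i h1 h2).symm, hlt⟩)
  · push Not at h
    rcases le_total s.length t.length with hl | hl
    · exact .inl (.inr ⟨hl, fun j h1 h2 => h j ⟨h1, by omega⟩⟩)
    · exact .inr (.inr ⟨hl, fun j h1 h2 => (h j ⟨h1, by omega⟩).symm⟩)

lemma not_sle_of_agree_of_gt {u v : List ℕ+} {j : ℕ} (hj1 : 1 ≤ j)
    (hj2 : j ≤ min u.length v.length) (hagree : ∀ i, 1 ≤ i → i < j → nthSeq u i = nthSeq v i)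
    (hgt : nthSeq v j < nthSeq u j) : ¬ sle u v := by
  rintro (⟨k, hk1, -, hagree', hlt⟩ | ⟨-, hext⟩)
  · rcases lt_trichotomy j k with hjk | rfl | hkj
    · exact hgt.ne' (hagree' j hj1 hjk)
    · exact lt_asymm hgt hlt
    · exact hlt.ne (hagree k hk1 hkj)
  · exact hgt.ne' (hext j hj1 (hj2.trans (min_le_left _ _)))

lemma sle_append_singleton_of_sle {s t : List ℕ+} (a : ℕ+) (h : sle t s) :
    sle t (s ++ [a]) := by
  rcases h with ⟨j, h1, h2, hagree, hlt⟩ | ⟨hlen, hext⟩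
  · have hjs : j ≤ s.length := h2.trans (min_le_right _ _)
    refine .inl ⟨j, h1, by simp; omega, fun i hi1 hi2 => ?_, ?_⟩
    · rw [nthSeq_append_singleton_of_le s a hi1 (by omega)]
      exact hagree i hi1 hi2
    · rwa [nthSeq_append_singleton_of_le s a h1 hjs]
  · refine .inr ⟨by simp; omega, fun j h1 h2 => ?_⟩
    rw [hext j h1 h2, nthSeq_append_singleton_of_le s a h1 (by omega)]

lemma not_sle_append_singleton (s : List ℕ+) (a : ℕ+) : ¬ sle (s ++ [a]) s := by
  rintro (⟨j, h1, h2, -, hlt⟩ | ⟨hlen, -⟩)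
  · rw [nthSeq_append_singleton_of_le s a h1 (by simp at h2; omega)] at hlt
    exact hlt.false
  · simp at hlen

lemma slt_append_singleton (s : List ℕ+) (a : ℕ+) : slt s (s ++ [a]) :=
  ⟨.inr ⟨by simp, fun _ h1 h2 => (nthSeq_append_singleton_of_le s a h1 h2).symm⟩,
    fun h => by simpa using congrArg List.length h⟩

lemma eq_or_eq_append_one_of_sle_of_sle {s t : List ℕ+} (h1 : sle s t)
    (h2 : sle t (s ++ [1])) : t = s ∨ t = s ++ [1] := by
  rcases h1 with ⟨j, hj1, hj2, hagree, hlt⟩ | ⟨hlen, hext⟩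
  · -- `t` branches off `s` upwards at `j`, hence also off `s ++ [1]`
    have hjs : j ≤ s.length := hj2.trans (min_le_left _ _)
    refine absurd h2 (not_sle_of_agree_of_gt hj1 (by simp; omega) (fun i hi1 hi2 => ?_) ?_)
    · rw [nthSeq_append_singleton_of_le s 1 hi1 (by omega)]
      exact (hagree i hi1 hi2).symm
    · rwa [nthSeq_append_singleton_of_le s 1 hj1 hjs]
  rcases h2 with ⟨j, hj1, hj2, -, hlt⟩ | ⟨hlen', hext'⟩
  · by_cases hjs : j ≤ s.length
    · rw [nthSeq_append_singleton_of_le s 1 hj1 hjs, hext j hj1 hjs] at hlt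
      exact absurd hlt (lt_irrefl _)
    · have hj : j = s.length + 1 := by simp at hj2; omega
      subst hj
      rw [nthSeq_append_singleton_length_succ] at hlt
      exact absurd (one_le_nthSeq t _) (by simpa using hlt)
  · simp only [List.length_append, List.length_singleton] at hlen'
    rcases hlen.eq_or_lt with hl | hl
    · exact .inl (eq_of_nthSeq_eq hl hext).symm
    · exact .inr (eq_of_nthSeq_eq (by simp; omega) hext')

lemma slt_append_one_iff {s t : List ℕ+} : slt t (s ++ [1]) ↔ slt t s ∨ t = s := by
  constructor
  · rintro ⟨hle, hne⟩
    rcases sle_total s t with h | h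
    · exact .inr ((eq_or_eq_append_one_of_sle_of_sle h hle).resolve_right hne)
    · exact or_iff_not_imp_right.2 fun hts => ⟨h, hts⟩
  · rintro (⟨hle, -⟩ | rfl)
    · refine ⟨sle_append_singleton_of_sle 1 hle, ?_⟩
      rintro rfl
      exact not_sle_append_singleton _ _ hle
    · exact slt_append_singleton _ 1

lemma getElem_le_of_mem_BSet {t : List ℕ+} (ht : t ∈ BSet) {i : ℕ} (hi : i < t.length) :
    (t[i] : ℕ) ≤ i + 1 := by
  rw [← nthSeq_succ t hi]
  exact ht.2 (i + 1) (by omega) (by omega)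

def encodeB (t : BSet) : Σ n : ℕ, ∀ i : Fin n, Fin (i + 1) :=
  ⟨t.1.length, fun i => ⟨t.1[i.1].natPred, by
    have := getElem_le_of_mem_BSet t.2 i.2
    simp only [PNat.natPred]
    omega⟩⟩

lemma encodeB_injective : Function.Injective encodeB := by
  let decode : (Σ n : ℕ, ∀ i : Fin n, Fin (i + 1)) → List ℕ := fun p => List.ofFn fun i => p.2 i
  have hdecode : decode ∘ encodeB = List.map PNat.natPred ∘ Subtype.val := by
    funext t
    exact List.ofFn_getElem_eq_map t.1 PNat.natPred
  refine Function.Injective.of_comp (f := decode) ?_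
  rw [hdecode]
  exact (List.map_injective_iff.2 PNat.natPred_injective).comp Subtype.val_injective

lemma card_pi_fin_succ (n : ℕ) : Fintype.card (∀ i : Fin n, Fin (i + 1)) = n.factorial := by
  simp [Fintype.card_pi, Fin.prod_univ_eq_prod_range (· + 1),
    Finset.prod_range_add_one_eq_factorial]

lemma factorial_mul_lam (n : ℕ) : (n.factorial : ℝ) * lam n = (1 / 2) ^ n := by
  rw [lam, one_div_pow, mul_one_div, mul_comm ((2 : ℝ) ^ n), ← div_div, div_self (by positivity)]

lemma summable_lam_sigma :
    Summable fun p : Σ n : ℕ, ∀ i : Fin n, Fin (i + 1) => lam p.1 := by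
  refine (summable_sigma_of_nonneg fun p => by unfold lam; positivity).2
    ⟨fun _ => .of_finite, ?_⟩
  simp only [tsum_fintype, Finset.sum_const, Finset.card_univ, card_pi_fin_succ, nsmul_eq_mul,
    factorial_mul_lam]
  exact summable_geometric_of_lt_one (by norm_num) (by norm_num)

lemma summable_lam_length_of_subset_BSet {X : Set (List ℕ+)} (hX : X ⊆ BSet) :
    Summable fun t : X => lam t.1.length :=
  (summable_lam_sigma.comp_injective (encodeB_injective.comp (Set.inclusion_injective hX))).congr
    fun _ => rfl

lemma tsum_insert_of_notMem {α M : Type*} [AddCommMonoid M] [TopologicalSpace M] [ContinuousAdd M]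
    [T2Space M] {f : α → M} {X : Set α} {a : α} (ha : a ∉ X) (hf : Summable fun x : X => f x) :
    ∑' x : ↥(insert a X), f x = f a + ∑' x : X, f x := by
  rw [Set.insert_eq, Summable.tsum_union_disjoint (Set.disjoint_singleton_left.2 ha)
    ((Set.finite_singleton a).summable f) hf, tsum_singleton]

lemma setOf_mem_BSet_slt_append_one {s : List ℕ+} (hs : s ∈ BSet) :
    {t | t ∈ BSet ∧ slt t (s ++ [1])} = insert s {t | t ∈ BSet ∧ slt t s} := by
  ext t
  simp only [Set.mem_ofPred_eq, Set.mem_insert_iff, slt_append_one_iff]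
  constructor
  · rintro ⟨ht, hlt | rfl⟩
    exacts [.inr ⟨ht, hlt⟩, .inl rfl]
  · rintro (rfl | ⟨ht, hlt⟩)
    exacts [⟨hs, .inr rfl⟩, ⟨ht, .inl hlt⟩]

lemma tau_eq_tsum_setOf (s : List ℕ+) :
    tau s = ∑' t : ↥{t | t ∈ BSet ∧ slt t s}, lam t.1.length :=
  rfl

lemma tau_append_one {s : List ℕ+} (hs : s ∈ BSet) : tau (s ++ [1]) = lam s.length + tau s := by
  have hnotMem : s ∉ {t | t ∈ BSet ∧ slt t s} := fun h => h.2.2 rfl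
  have hsum : Summable fun t : {t | t ∈ BSet ∧ slt t s} => lam t.1.length :=
    summable_lam_length_of_subset_BSet fun _ ht => ht.1
  rw [tau_eq_tsum_setOf, tau_eq_tsum_setOf, setOf_mem_BSet_slt_append_one hs]
  exact tsum_insert_of_notMem (f := fun t : List ℕ+ => lam t.length) hnotMem hsum

/-- Let `s ∈ B_n` and `t ∈ B`. If `s ⪯ t ⪯ s + ⟨1⟩`, then `t = s` or `t = s + ⟨1⟩`.
Moreover `τ (s + ⟨1⟩) - τ s = λ n`. -/
theorem between_append_one (n : ℕ) (s : List ℕ+) (hs : s ∈ BSet) (hlen : s.length = n) :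
    (∀ t ∈ BSet, sle s t → sle t (s ++ [1]) → t = s ∨ t = s ++ [1]) ∧
    tau (s ++ [1]) - tau s = lam n :=
  ⟨fun _ _ => eq_or_eq_append_one_of_sle_of_sle,
    by rw [tau_append_one hs, hlen, add_sub_cancel_right]⟩
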